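/- arXiv:1609.06136 — 6 statements merged into one kernel-verified Lean document; each statement's English description precedes it below -/
import Mathlib

section
/- Let h_0 > 0 and r_0 = (4/27) h_0^{3/2}. The function τ_0 defined on (−∞, r_0) by τ_0(r) = (1/3)(√h_0 + C(r) + h_0/C(r)) with C(r) = (3/2)(−4r + 2r_0 + 4√(r(r−r_0)))^{1/3} (taking the branch with τ_0(0) = √h_0) satisfies τ_0(r)³ − √(h_0) τ_0(r)² + r = 0 for all r < r_0, and τ_0(0) = √h_0. -/
noncomputable section

/-- The Cardano auxiliary quantity
`C(r) = (3/2) (−4r + 2r₀ + 4 √(r(r−r₀)))^{1/3}`, with `r₀ = (4/27) h₀^{3/2}`,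
computed with the principal complex square and cube roots. -/
def Cardano (h0 r : ℝ) : ℂ :=
  (3 / 2) *
    ((((-4 * r + 2 * ((4 / 27) * Real.sqrt h0 ^ 3) : ℝ) : ℂ) +
        4 * (((r * (r - (4 / 27) * Real.sqrt h0 ^ 3) : ℝ) : ℂ)) ^ ((1 : ℂ) / 2)) ^
      ((1 : ℂ) / 3))

/-- `τ₀(r) = (1/3)(√h₀ + C(r) + h₀/C(r))`. -/
def tau0 (h0 r : ℝ) : ℂ :=
  (1 / 3) * ((Real.sqrt h0 : ℂ) + Cardano h0 r + (h0 : ℂ) / Cardano h0 r)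

/-! Write `a = √h₀` and `r₀ = (4/27) a³`. The substitution `τ = (a + C + a²/C)/3` turns
`τ³ − a τ² + r = 0` into the quadratic resolvent `C⁶ − (2a³ − 27r) C³ + a⁶ = 0` in `C³`, and
`C³ = (27/8)(−4r + 2r₀ + 4s)` with `s² = r(r − r₀)` is one of its roots.

For `r ≤ 0` the radicand is a nonnegative real, hence so is `C`. For `0 < r < r₀` the square
root `s` is purely imaginary, so the radicand and its conjugate are the two roots
`−4r + 2r₀ ± 4s`, whose product is `(2r₀)²`; hence `|C| = a`, `a²/C = conj C` and `τ` is real.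
At `r = 0` the radicand is `((2/3) a)³`, so `C = a` and `τ = a`. -/

open ComplexConjugate
open scoped ComplexOrder

lemma Complex.conj_eq_neg_of_sq_eq_ofReal_nonpos {s : ℂ} {x : ℝ} (hx : x ≤ 0)
    (hs : s ^ 2 = x) : conj s = -s := by
  have hre := congrArg Complex.re hs
  have him := congrArg Complex.im hs
  simp only [sq, Complex.mul_re, Complex.mul_im, Complex.ofReal_re, Complex.ofReal_im] at hre him
  have hs_re : s.re = 0 := by
    rcases mul_eq_zero.mp (show s.re * s.im = 0 by linarith) with h | h
    · exact h
    · exact pow_eq_zero_iff two_ne_zero |>.mp (le_antisymm (by nlinarith) (sq_nonneg _))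
  exact Complex.ext (by simp [hs_re]) (by simp)

lemma Complex.cpow_ofReal_nonneg {x : ℂ} (hx : 0 ≤ x) (y : ℝ) : 0 ≤ x ^ (y : ℂ) := by
  have hx' : x = x.re := Complex.eq_re_of_ofReal_le (by rwa [Complex.ofReal_zero])
  rw [hx', ← Complex.ofReal_cpow (by simpa using Complex.re_le_re hx)]
  exact Complex.zero_le_real.mpr (Real.rpow_nonneg (by simpa using Complex.re_le_re hx) y)

lemma cubic_root_of_resolvent {a r C : ℂ} (ha : a ≠ 0)
    (h : C ^ 6 - (2 * a ^ 3 - 27 * r) * C ^ 3 + a ^ 6 = 0) :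
    (1 / 3 * (a + C + a ^ 2 / C)) ^ 3 - a * (1 / 3 * (a + C + a ^ 2 / C)) ^ 2 + r = 0 := by
  have hC : C ≠ 0 := by
    rintro rfl
    exact ha (pow_eq_zero_iff (n := 6) (by norm_num) |>.mp (by simpa using h))
  field_simp
  linear_combination h

lemma resolvent_of_pow_three_eq {a r s C : ℂ} (hs : s ^ 2 = r * (r - 4 / 27 * a ^ 3))
    (hC : C ^ 3 = 27 / 8 * (-4 * r + 2 * (4 / 27 * a ^ 3) + 4 * s)) :
    C ^ 6 - (2 * a ^ 3 - 27 * r) * C ^ 3 + a ^ 6 = 0 := by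
  linear_combination (C ^ 3 + 27 / 8 * (-4 * r + 2 * (4 / 27 * a ^ 3) + 4 * s)
    - (2 * a ^ 3 - 27 * r)) * hC + 729 / 4 * hs

lemma im_add_add_div_of_nonneg (a b : ℝ) {C : ℂ} (hC : 0 ≤ C) :
    ((a : ℂ) + C + b / C).im = 0 := by
  simp [Complex.div_im, ← (Complex.nonneg_iff.mp hC).2]

lemma im_add_add_div_of_sq_norm_eq (a : ℝ) {b : ℝ} {C : ℂ} (hC : ‖C‖ ^ 2 = b) :
    ((a : ℂ) + C + b / C).im = 0 := by
  have : (b : ℂ) / C = conj C := by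
    rcases eq_or_ne C 0 with rfl | hC0
    · simp
    · rw [div_eq_iff hC0, mul_comm, Complex.mul_conj, ← Complex.sq_norm, hC]
  simp [this]

section

variable (h0 r : ℝ)

def cardanoSqrt : ℂ := (((r * (r - (4 / 27) * Real.sqrt h0 ^ 3) : ℝ) : ℂ)) ^ ((1 : ℂ) / 2)

def cardanoRadicand : ℂ :=
  ((-4 * r + 2 * ((4 / 27) * Real.sqrt h0 ^ 3) : ℝ) : ℂ) + 4 * cardanoSqrt h0 r

lemma Cardano_eq : Cardano h0 r = 3 / 2 * cardanoRadicand h0 r ^ ((1 : ℂ) / 3) := rfl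

lemma cardanoSqrt_sq :
    cardanoSqrt h0 r ^ 2 = ((r * (r - (4 / 27) * Real.sqrt h0 ^ 3) : ℝ) : ℂ) := by
  rw [cardanoSqrt, one_div, Complex.cpow_ofNat_inv_pow]

lemma Cardano_pow_three : Cardano h0 r ^ 3 = 27 / 8 * cardanoRadicand h0 r := by
  rw [Cardano_eq, mul_pow, one_div, Complex.cpow_ofNat_inv_pow]
  norm_num

lemma tau0_cubic {h0 : ℝ} (hh0 : 0 < h0) (r : ℝ) :
    tau0 h0 r ^ 3 - (Real.sqrt h0 : ℂ) * tau0 h0 r ^ 2 + (r : ℂ) = 0 := by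
  have ha : (Real.sqrt h0 : ℂ) ≠ 0 := by exact_mod_cast (Real.sqrt_pos.mpr hh0).ne'
  have hh0' : (h0 : ℂ) = (Real.sqrt h0 : ℂ) ^ 2 := by exact_mod_cast (Real.sq_sqrt hh0.le).symm
  rw [tau0, hh0']
  refine cubic_root_of_resolvent ha (resolvent_of_pow_three_eq (s := cardanoSqrt h0 r) ?_ ?_)
  · rw [cardanoSqrt_sq]; push_cast; ring
  · rw [Cardano_pow_three, cardanoRadicand]; push_cast; ring

variable {h0 r}

lemma Cardano_nonneg (hr : r ≤ 0) : 0 ≤ Cardano h0 r := by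
  have hr0 : 0 ≤ Real.sqrt h0 ^ 3 := by positivity
  have hz : 0 ≤ r * (r - 4 / 27 * Real.sqrt h0 ^ 3) :=
    mul_nonneg_of_nonpos_of_nonpos hr (by linarith)
  have hs : 0 ≤ cardanoSqrt h0 r := by
    simpa [cardanoSqrt] using Complex.cpow_ofReal_nonneg (Complex.zero_le_real.mpr hz) (1 / 2)
  have hD : 0 ≤ cardanoRadicand h0 r :=
    add_nonneg (Complex.zero_le_real.mpr (by linarith)) (mul_nonneg (by norm_num) hs)
  rw [Cardano_eq]
  exact mul_nonneg (by norm_num [Complex.le_def])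
    (by simpa using Complex.cpow_ofReal_nonneg hD (1 / 3))

lemma sq_norm_cardanoRadicand (hr : 0 ≤ r) (hr0 : r ≤ 4 / 27 * Real.sqrt h0 ^ 3) :
    ‖cardanoRadicand h0 r‖ ^ 2 = (8 / 27 * Real.sqrt h0 ^ 3) ^ 2 := by
  have hconj : conj (cardanoSqrt h0 r) = -cardanoSqrt h0 r :=
    Complex.conj_eq_neg_of_sq_eq_ofReal_nonpos (mul_nonpos_of_nonneg_of_nonpos hr (by linarith))
      (cardanoSqrt_sq h0 r)
  have hD : cardanoRadicand h0 r * conj (cardanoRadicand h0 r) =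
      ((8 / 27 * Real.sqrt h0 ^ 3) ^ 2 : ℝ) := by
    rw [cardanoRadicand, map_add, map_mul, hconj, Complex.conj_ofReal, map_ofNat]
    have hs := cardanoSqrt_sq h0 r
    push_cast at hs ⊢
    linear_combination (-16 : ℂ) * hs
  rw [Complex.sq_norm]
  exact_mod_cast (Complex.mul_conj _).symm.trans hD

lemma sq_norm_Cardano (hr : 0 < r) (hr0 : r < 4 / 27 * Real.sqrt h0 ^ 3) :
    ‖Cardano h0 r‖ ^ 2 = h0 := by
  have hh0 : 0 ≤ h0 := by
    by_contra h
    rw [Real.sqrt_eq_zero_of_nonpos (by linarith)] at hr0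
    linarith
  have h6 : (‖Cardano h0 r‖ ^ 2) ^ 3 = h0 ^ 3 := calc
    (‖Cardano h0 r‖ ^ 2) ^ 3 = ‖Cardano h0 r ^ 3‖ ^ 2 := by rw [norm_pow]; ring
    _ = (27 / 8) ^ 2 * ‖cardanoRadicand h0 r‖ ^ 2 := by
      rw [Cardano_pow_three, norm_mul]; norm_num; ring
    _ = h0 ^ 3 := by
      rw [sq_norm_cardanoRadicand hr.le hr0.le]
      linear_combination (Real.sqrt h0 ^ 4 + Real.sqrt h0 ^ 2 * h0 + h0 ^ 2) * Real.sq_sqrt hh0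
  exact (pow_left_inj₀ (by positivity) hh0 three_ne_zero).mp h6

lemma tau0_im_eq_zero (hr : r < 4 / 27 * Real.sqrt h0 ^ 3) : (tau0 h0 r).im = 0 := by
  have key : ((Real.sqrt h0 : ℂ) + Cardano h0 r + h0 / Cardano h0 r).im = 0 := by
    rcases le_or_gt r 0 with hr' | hr'
    · exact im_add_add_div_of_nonneg _ _ (Cardano_nonneg hr')
    · exact im_add_add_div_of_sq_norm_eq _ (sq_norm_Cardano hr' hr)
  rw [tau0, Complex.mul_im, key]
  simp

end

lemma Cardano_zero (h0 : ℝ) : Cardano h0 0 = Real.sqrt h0 := by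
  have hD : cardanoRadicand h0 0 = ((2 / 3 * Real.sqrt h0 : ℝ) : ℂ) ^ 3 := by
    rw [cardanoRadicand, cardanoSqrt, zero_mul, Complex.ofReal_zero,
      Complex.zero_cpow (by norm_num)]
    push_cast
    ring
  have harg : Complex.arg ((2 / 3 * Real.sqrt h0 : ℝ) : ℂ) = 0 :=
    Complex.arg_ofReal_of_nonneg (by positivity)
  rw [Cardano_eq, hD, one_div, Complex.pow_cpow_ofNat_inv (by rw [harg]; linarith [Real.pi_pos])
    (by rw [harg]; positivity)]
  push_cast
  ring

lemma tau0_zero (h0 : ℝ) : tau0 h0 0 = Real.sqrt h0 := by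
  rw [tau0, Cardano_zero, ← Complex.ofReal_div, Real.div_sqrt]
  ring

/-- For all `r < r₀ = (4/27) h₀^{3/2}`, the branch `τ₀(r)` is a (real) root of the cubic
`τ³ − √h₀ τ² + r = 0`, and `τ₀(0) = √h₀`. -/
theorem stmt_4 (h0 : ℝ) (hh0 : 0 < h0) :
    (∀ r : ℝ, r < (4 / 27) * Real.sqrt h0 ^ 3 →
      tau0 h0 r ^ 3 - (Real.sqrt h0 : ℂ) * tau0 h0 r ^ 2 + (r : ℂ) = 0 ∧
      (tau0 h0 r).im = 0) ∧
    tau0 h0 0 = (Real.sqrt h0 : ℂ) :=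
  ⟨fun r hr => ⟨tau0_cubic hh0 r, tau0_im_eq_zero hr⟩, tau0_zero h0⟩
end
end

section
/- With h_0 > 0, x_- < x_+, g > 0, and r_0 = (4/27) h_0^{3/2}, define the damping function ν(v) = ρ g (x_+ − x_-)[h_0 − τ_0((x_+ − x_-) v /(4√g))²] for |v| small enough that (x_+ − x_-)|v|/(4√g) < r_0, where τ_0(r) is the root of τ³ − √h_0 τ² + r = 0 with τ_0(0) = √h_0 depending continuously (in fact smoothly) on r. Then ν(v)·v ≥ 0 for all such v, i.e. ν is a genuine damping term. -/
/-- The damping term `ν(v) = ρ g (x₊ − x₋)[h₀ − τ₀((x₊−x₋)v/(4√g))²]` satisfies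
`ν(v)·v ≥ 0` for all `v` with `(x₊−x₋)|v|/(4√g) < r₀`, where `τ₀` is the continuous
root of `τ³ − √h₀ τ² + r = 0` with `τ₀(0) = √h₀` and `r₀ = (4/27) h₀^{3/2}`. -/
theorem stmt_5 (ρ g h0 xm xp : ℝ) (hρ : 0 < ρ) (hg : 0 < g) (hh0 : 0 < h0)
    (hx : xm < xp) (τ0 : ℝ → ℝ)
    (hcont : ContinuousOn τ0 (Set.Iio ((4 / 27) * Real.sqrt h0 ^ 3)))
    (hroot : ∀ r < (4 / 27) * Real.sqrt h0 ^ 3,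
      τ0 r ^ 3 - Real.sqrt h0 * τ0 r ^ 2 + r = 0)
    (h00 : τ0 0 = Real.sqrt h0) :
    ∀ v : ℝ, (xp - xm) * |v| / (4 * Real.sqrt g) < (4 / 27) * Real.sqrt h0 ^ 3 →
      0 ≤ ρ * g * (xp - xm) *
          (h0 - τ0 ((xp - xm) * v / (4 * Real.sqrt g)) ^ 2) * v := by
  intro v hv
  set s := Real.sqrt h0 with hs
  have hs0 : 0 < s := Real.sqrt_pos.mpr hh0
  have hsq : s ^ 2 = h0 := Real.sq_sqrt hh0.le
  have hxx : 0 < xp - xm := sub_pos.mpr hx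
  have hsg : 0 < Real.sqrt g := Real.sqrt_pos.mpr hg
  set r := (xp - xm) * v / (4 * Real.sqrt g) with hr
  have habs : |r| < (4 / 27) * s ^ 3 := by
    rw [hr, abs_div, abs_mul, abs_of_pos hxx,
      abs_of_pos (by positivity : (0:ℝ) < 4 * Real.sqrt g)]
    exact hv
  have hrlt : r < (4 / 27) * s ^ 3 := lt_of_le_of_lt (le_abs_self r) habs
  have hr0pos : (0:ℝ) < (4 / 27) * s ^ 3 := by positivity
  have hmem : ∀ x ∈ Set.uIcc 0 r, x ∈ Set.Iio ((4 / 27) * s ^ 3) := by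
    intro x hx'
    rcases Set.mem_uIcc.mp hx' with ⟨h1, h2⟩ | ⟨h1, h2⟩
    · exact lt_of_le_of_lt h2 hrlt
    · exact lt_of_le_of_lt h2 hr0pos
  have hne : ∀ x ∈ Set.uIcc 0 r, τ0 x ≠ -s := by
    intro x hx' hEq
    have hroot' := hroot x (hmem x hx')
    rw [hEq] at hroot'
    have hx2 : x = 2 * s ^ 3 := by nlinarith
    have hm := hmem x hx'
    rw [hx2] at hm
    simp only [Set.mem_Iio] at hm
    nlinarith [pow_pos hs0 3]
  have hτgt : -s < τ0 r := by
    by_contra hle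
    push_neg at hle
    have hcont' : ContinuousOn τ0 (Set.uIcc 0 r) :=
      hcont.mono (fun x hx' => hmem x hx')
    have hmem2 : -s ∈ Set.uIcc (τ0 0) (τ0 r) := by
      rw [h00]
      exact Set.mem_uIcc.mpr (Or.inr ⟨hle, neg_le_self hs0.le⟩)
    obtain ⟨x, hx', hxeq⟩ := intermediate_value_uIcc hcont' hmem2
    exact hne x hx' hxeq
  have hkey : 0 ≤ (h0 - τ0 r ^ 2) * r := by
    have hroot' := hroot r hrlt
    nlinarith [sq_nonneg (s - τ0 r), sq_nonneg (τ0 r), mul_nonneg (sq_nonneg (s - τ0 r)) (sq_nonneg (τ0 r))]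
  have hv' : (h0 - τ0 r ^ 2) * v =
      ((h0 - τ0 r ^ 2) * r) * ((4 * Real.sqrt g) / (xp - xm)) := by
    rw [hr]; field_simp
  have hnn : 0 ≤ (h0 - τ0 r ^ 2) * v := by
    rw [hv']
    exact mul_nonneg hkey (by positivity)
  calc (0:ℝ) ≤ (ρ * g * (xp - xm)) * ((h0 - τ0 r ^ 2) * v) :=
        mul_nonneg (by positivity) hnn
    _ = ρ * g * (xp - xm) * (h0 - τ0 r ^ 2) * v := by ring
end

section
/- Let x_- < x_+ and suppose h_w(t, x) = h_eq(x) + δ(t) with h_eq continuous positive and δ differentiable with h_eq + δ > 0. Define ⟨f⟩(t) = (∫_{x_-}^{x_+} f/h_w(t,·))/(∫_{x_-}^{x_+} 1/h_w(t,·)). Then d/dt ⟨x⟩(t) = −(⟨x/h_w⟩ − ⟨x⟩⟨1/h_w⟩) δ̇(t), where ⟨x/h_w⟩ and ⟨1/h_w⟩ denote the weighted averages (with weight 1/h_w) of the functions x ↦ x/h_w(t,x) and x ↦ 1/h_w(t,x). -/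
/-!
Write `N(y) = ∫ x/(h_eq + y)` and `D(y) = ∫ 1/(h_eq + y)`, so that `⟨x⟩(t) = N(δ t)/D(δ t)`.
Differentiating under the integral sign gives `N' = -∫ x/(h_eq + y)²` and `D' = -∫ 1/(h_eq + y)²`;
the differentiated integrands are dominated uniformly for `y` near `δ t` because
`h_eq + δ t` has a positive minimum on the compact interval. The chain rule and the quotient
rule then give the formula.
-/

open Set
open scoped Interval

lemma hasDerivAt_div_const_add (c d y : ℝ) (hy : d + y ≠ 0) :
    HasDerivAt (fun y => c / (d + y)) (-(c / (d + y) / (d + y))) y := by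
  have hd : HasDerivAt (fun y => d + y) 1 y := (hasDerivAt_id y).const_add d
  refine ((hasDerivAt_const y c).div hd hy).congr_deriv ?_
  rw [div_div, ← sq]
  ring

section ParametricIntegral

variable {a b : ℝ} {g h : ℝ → ℝ}

lemma continuousOn_div_add_const (hg : ContinuousOn g [[a, b]]) (hh : ContinuousOn h [[a, b]])
    {y : ℝ} (hy : ∀ x ∈ [[a, b]], 0 < h x + y) :
    ContinuousOn (fun x => g x / (h x + y)) [[a, b]] :=
  hg.div (hh.add continuousOn_const) fun x hx => (hy x hx).ne'

lemma exists_pos_forall_le_add_of_mem_ball (hh : ContinuousOn h [[a, b]]) {y₀ : ℝ}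
    (hpos : ∀ x ∈ [[a, b]], 0 < h x + y₀) :
    ∃ ε > 0, ∀ x ∈ [[a, b]], ∀ y ∈ Metric.ball y₀ ε, ε ≤ h x + y := by
  obtain ⟨c, hc, hc_le⟩ := isCompact_uIcc.exists_forall_le' (hh.add continuousOn_const) hpos
  refine ⟨c / 2, half_pos hc, fun x hx y hy => ?_⟩
  have := (abs_lt.mp (Real.dist_eq y y₀ ▸ Metric.mem_ball.mp hy)).1
  linarith [show c ≤ h x + y₀ from hc_le x hx]

theorem hasDerivAt_integral_div_add_const (hg : ContinuousOn g [[a, b]])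
    (hh : ContinuousOn h [[a, b]]) {y₀ : ℝ} (hpos : ∀ x ∈ [[a, b]], 0 < h x + y₀) :
    HasDerivAt (fun y => ∫ x in a..b, g x / (h x + y))
      (-∫ x in a..b, g x / (h x + y₀) / (h x + y₀)) y₀ := by
  obtain ⟨ε, hε, h_lower⟩ := exists_pos_forall_le_add_of_mem_ball hh hpos
  obtain ⟨M, hM⟩ := isCompact_uIcc.exists_bound_of_continuousOn hg
  set s := Metric.ball y₀ ε
  have hs : s ∈ nhds y₀ := Metric.ball_mem_nhds y₀ hε
  have h_pos : ∀ y ∈ s, ∀ x ∈ [[a, b]], 0 < h x + y := fun y hy x hx =>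
    hε.trans_le (h_lower x hx y hy)
  have h_cont : ∀ y ∈ s, ContinuousOn (fun x => g x / (h x + y)) [[a, b]] := fun y hy =>
    continuousOn_div_add_const hg hh (h_pos y hy)
  have hy₀ : y₀ ∈ s := Metric.mem_ball_self hε
  have hF' : ContinuousOn (fun x => -(g x / (h x + y₀) / (h x + y₀))) [[a, b]] :=
    ((h_cont y₀ hy₀).div (hh.add continuousOn_const) fun x hx => (h_pos y₀ hy₀ x hx).ne').neg
  rw [← intervalIntegral.integral_neg]
  refine (intervalIntegral.hasDerivAt_integral_of_dominated_loc_of_deriv_le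
    (F' := fun y x => -(g x / (h x + y) / (h x + y))) (bound := fun _ => M / ε / ε)
    hs ?_ ((h_cont y₀ hy₀).intervalIntegrable) ?_ ?_ intervalIntegrable_const ?_).2
  · filter_upwards [hs] with y hy
    exact ((h_cont y hy).mono uIoc_subset_uIcc).aestronglyMeasurable measurableSet_uIoc
  · exact (hF'.mono uIoc_subset_uIcc).aestronglyMeasurable measurableSet_uIoc
  · refine Filter.Eventually.of_forall fun x hx y hy => ?_
    have hx' := uIoc_subset_uIcc hx
    have hM0 : 0 ≤ M := (norm_nonneg _).trans (hM x hx')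
    rw [norm_neg, norm_div, norm_div, Real.norm_of_nonneg (h_pos y hy x hx').le]
    gcongr
    exacts [hM x hx', h_lower x hx' y hy, h_lower x hx' y hy]
  · exact Filter.Eventually.of_forall fun x hx y hy =>
      hasDerivAt_div_const_add (g x) (h x) y (h_pos y hy x (uIoc_subset_uIcc hx)).ne'

end ParametricIntegral

/-- If `h_w(t,x) = h_eq(x) + δ(t) > 0`, the weighted center
`⟨x⟩(t) = (∫ x/h_w)/(∫ 1/h_w)` satisfies
`d/dt ⟨x⟩ = −(⟨x/h_w⟩ − ⟨x⟩⟨1/h_w⟩) δ̇(t)`, where `⟨·⟩` is the average with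
weight `1/h_w`. -/
theorem stmt_9 (a b : ℝ) (hab : a < b) (heq : ℝ → ℝ) (δ δ' : ℝ → ℝ)
    (hcont : ContinuousOn heq (Set.Icc a b))
    (hδ : ∀ t, HasDerivAt δ (δ' t) t)
    (hpos : ∀ t, ∀ x ∈ Set.Icc a b, 0 < heq x + δ t) :
    ∀ t, HasDerivAt
      (fun s => (∫ x in a..b, x / (heq x + δ s)) /
        (∫ x in a..b, 1 / (heq x + δ s)))
      (-(((∫ x in a..b, (x / (heq x + δ t)) / (heq x + δ t)) /
            (∫ x in a..b, 1 / (heq x + δ t)))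
          - ((∫ x in a..b, x / (heq x + δ t)) / (∫ x in a..b, 1 / (heq x + δ t)))
            * ((∫ x in a..b, (1 / (heq x + δ t)) / (heq x + δ t)) /
                (∫ x in a..b, 1 / (heq x + δ t))))
        * δ' t) t := by
  intro t
  rw [← uIcc_of_le hab.le] at hcont hpos
  have hN := (hasDerivAt_integral_div_add_const (g := fun x => x) continuousOn_id hcont
    (hpos t)).comp t (hδ t)
  have hD := (hasDerivAt_integral_div_add_const (g := fun _ => 1) continuousOn_const hcont
    (hpos t)).comp t (hδ t)
  have hD_pos : 0 < ∫ x in a..b, 1 / (heq x + δ t) :=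
    intervalIntegral.intervalIntegral_pos_of_pos_on
      (continuousOn_div_add_const (g := fun _ => 1) continuousOn_const hcont
        (hpos t)).intervalIntegrable
      (fun x hx => one_div_pos.mpr (hpos t x (Icc_subset_uIcc (Ioo_subset_Icc_self hx)))) hab
  refine (hN.div hD hD_pos.ne').congr_deriv ?_
  simp only [Function.comp_apply]
  field_simp
  ring
end

section
/- Consider the finite-volume time iteration h_j^{n+1} = h_j^n − (α/2)(q_{j+1}^n − q_{j-1}^n) and q_j^{n+1} = q_j^n − α(F_{2,j+1/2}^n − F_{2,j-1/2}^n) + δ_t S_j^n for indices j in a range j_- < j < j_+, where α = δ_t/δ_x. If the source terms satisfy, for all n and all j_- < j < j_+, (S_{j+1}^n − S_{j-1}^n)/(2δ_x) = −A_j^{n+1} + [(D_0 F_2^n)_{j+1} − (D_0 F_2^n)_{j-1}]/(2δ_x) where (D_0 F_2^n)_j = (F_{2,j+1/2}^n − F_{2,j-1/2}^n)/δ_x and A_j^{n+1} = (g_j^{n+2} − 2g_j^{n+1} + g_j^n)/δ_t², and if the initial data satisfy h_j^0 = g_j^0 and h_j^1 = g_j^1 for all j_- < j < j_+, then h_j^n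 = g_j^n for all n ≥ 0 and all j_- < j < j_+. -/
/-!
Differencing the mass equation in time and inserting the momentum equation at `j ± 1`
expresses the second time difference of `h_j` through `S_{j+1} - S_{j-1}` and the fluxes;
the compatibility condition on `S` cancels the fluxes and leaves exactly the second time
difference of `g_j`. Since `h_j` and `g_j` agree at the first two times, they agree forever.
-/

theorem eq_of_secondDiff_eq {M : Type*} [AddCommGroup M] {u v : ℕ → M}
    (h0 : u 0 = v 0) (h1 : u 1 = v 1)
    (hdiff : ∀ n, u (n + 2) - 2 • u (n + 1) + u n = v (n + 2) - 2 • v (n + 1) + v n) :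
    u = v := by
  funext n
  induction n using Nat.twoStepInduction with
  | zero => exact h0
  | one => exact h1
  | more n ihn ihn1 =>
    have := hdiff n
    rwa [ihn, ihn1, add_left_inj, sub_left_inj] at this

theorem secondDiff_depth_eq_secondDiff_bottom {δt δx : ℝ} (hδt : δt ≠ 0) (hδx : δx ≠ 0)
    {h q g S F : ℕ → ℤ → ℝ} {n : ℕ} {j : ℤ}
    (hh : ∀ m, h (m + 1) j = h m j - (δt / δx) / 2 * (q m (j + 1) - q m (j - 1)))
    (hq : ∀ i, q (n + 1) i = q n i - (δt / δx) * (F n i - F n (i - 1)) + δt * S n i)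
    (hS : (S n (j + 1) - S n (j - 1)) / (2 * δx)
        = -((g (n + 2) j - 2 * g (n + 1) j + g n j) / δt ^ 2)
          + ((F n (j + 1) - F n j) / δx - (F n (j - 1) - F n (j - 2)) / δx) / (2 * δx)) :
    h (n + 2) j - 2 * h (n + 1) j + h n j = g (n + 2) j - 2 * g (n + 1) j + g n j := by
  have hh_diff : h (n + 2) j - 2 * h (n + 1) j + h n j
      = -(δt / δx) / 2
          * ((q (n + 1) (j + 1) - q n (j + 1)) - (q (n + 1) (j - 1) - q n (j - 1))) := by
    rw [hh (n + 1), hh n]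
    ring
  have hq_diff : (q (n + 1) (j + 1) - q n (j + 1)) - (q (n + 1) (j - 1) - q n (j - 1))
      = δt * (S n (j + 1) - S n (j - 1))
        - δt / δx * ((F n (j + 1) - F n j) - (F n (j - 1) - F n (j - 2))) := by
    have hj : j - 1 - 1 = j - 2 := by ring
    rw [hq (j + 1), hq (j - 1), add_sub_cancel_right, hj]
    ring
  have hS_diff : δt * (S n (j + 1) - S n (j - 1))
      = δt / δx * ((F n (j + 1) - F n j) - (F n (j - 1) - F n (j - 2)))
        - 2 * δx / δt * (g (n + 2) j - 2 * g (n + 1) j + g n j) := by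
    field_simp at hS ⊢
    linear_combination hS
  rw [hh_diff, hq_diff, hS_diff]
  field_simp
  ring

/-- Discrete Lagrange multiplier property of the source term: for the finite-volume
scheme `h_j^{n+1} = h_j^n − (α/2)(q_{j+1}^n − q_{j−1}^n)`,
`q_j^{n+1} = q_j^n − α(F_{j+1/2}^n − F_{j−1/2}^n) + δt S_j^n` (with `α = δt/δx`),
if the source terms satisfy the compatibility relation with the prescribed sequence
`g_j^n` in the interior cells and the initial data match, then `h_j^n = g_j^n` in the
interior cells for all times. Here `F n j` stands for `F_{2,j+1/2}^n`. -/
theorem stmt_12 (jm jp : ℤ) (δt δx : ℝ) (hδt : 0 < δt) (hδx : 0 < δx)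
    (h q g S F : ℕ → ℤ → ℝ)
    (hh : ∀ n : ℕ, ∀ j : ℤ, jm < j → j < jp →
      h (n + 1) j = h n j - (δt / δx) / 2 * (q n (j + 1) - q n (j - 1)))
    (hq : ∀ n : ℕ, ∀ j : ℤ,
      q (n + 1) j = q n j - (δt / δx) * (F n j - F n (j - 1)) + δt * S n j)
    (hS : ∀ n : ℕ, ∀ j : ℤ, jm < j → j < jp →
      (S n (j + 1) - S n (j - 1)) / (2 * δx)
        = -((g (n + 2) j - 2 * g (n + 1) j + g n j) / δt ^ 2)
          + ((F n (j + 1) - F n j) / δx - (F n (j - 1) - F n (j - 2)) / δx)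
              / (2 * δx))
    (hinit0 : ∀ j : ℤ, jm < j → j < jp → h 0 j = g 0 j)
    (hinit1 : ∀ j : ℤ, jm < j → j < jp → h 1 j = g 1 j) :
    ∀ n : ℕ, ∀ j : ℤ, jm < j → j < jp → h n j = g n j := by
  intro n j hjm hjp
  have hcell : (fun m => h m j) = fun m => g m j := by
    refine eq_of_secondDiff_eq (hinit0 j hjm hjp) (hinit1 j hjm hjp) fun m => ?_
    simp only [two_nsmul, ← two_mul]
    exact secondDiff_depth_eq_secondDiff_bottom hδt.ne' hδx.ne'
      (fun k => hh k j hjm hjp) (hq m) (hS m j hjm hjp)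
  exact congrFun hcell n
end

section
/- Let ζ_w: ℝ × ℝ → ℝ be smooth, G(t) = (x_G(t), z_G(t)) a smooth curve in ℝ², U_G = (ẋ_G, ż_G), ω: ℝ → ℝ a smooth function, and for each (t,x) set r_G(t,x) = (x − x_G(t), ζ_w(t,x) − z_G(t)) and N_w(t,x) = (−∂_x ζ_w(t,x), 1). Suppose the kinematic condition ∂_t ζ_w = (U_G + ω J r_G)·N_w holds identically, where J is rotation by 90° (J(a,b) = (−b,a)). Then ∂_t² ζ_w = (U̇_G + ω̇ J r_G)·N_w + (ω J N_w)·(2 U_{w,τ} − ω J r_G) + V_w² ∂_x² ζ_w, where V_w = ẋ_G + ω(ζ_w − z_G) is the horizontal component of the boundary velocity U_w = U_G + ω J r_G and U_{w,τ} = U_w − (U_w·N_w) e_z. -/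
private lemma pd1 {g : ℝ × ℝ → ℝ} (hg : ContDiff ℝ (⊤ : ℕ∞) g) (t x : ℝ) :
    HasDerivAt (fun s => g (s, x)) (fderiv ℝ g (t, x) (1, 0)) t := by
  have h1 : HasFDerivAt g (fderiv ℝ g (t, x)) (t, x) :=
    (hg.differentiable (by simp) (t, x)).hasFDerivAt
  have h2 : HasDerivAt (fun s : ℝ => (s, x)) ((1 : ℝ), (0 : ℝ)) t :=
    (hasDerivAt_id t).prodMk (hasDerivAt_const t x)
  exact h1.comp_hasDerivAt t h2

private lemma pd2 {g : ℝ × ℝ → ℝ} (hg : ContDiff ℝ (⊤ : ℕ∞) g) (t x : ℝ) :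
    HasDerivAt (fun y => g (t, y)) (fderiv ℝ g (t, x) (0, 1)) x := by
  have h1 : HasFDerivAt g (fderiv ℝ g (t, x)) (t, x) :=
    (hg.differentiable (by simp) (t, x)).hasFDerivAt
  have h2 : HasDerivAt (fun y : ℝ => (t, y)) ((0 : ℝ), (1 : ℝ)) x :=
    (hasDerivAt_const x t).prodMk (hasDerivAt_id x)
  exact h1.comp_hasDerivAt x h2

private lemma fd_smooth {g : ℝ × ℝ → ℝ} (hg : ContDiff ℝ (⊤ : ℕ∞) g) (v : ℝ × ℝ) :
    ContDiff ℝ (⊤ : ℕ∞) (fun p => fderiv ℝ g p v) :=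
  (hg.fderiv_right (by exact_mod_cast le_top)).clm_apply contDiff_const

private lemma mixed_symm {g : ℝ × ℝ → ℝ} (hg : ContDiff ℝ (⊤ : ℕ∞) g) (p v w : ℝ × ℝ) :
    fderiv ℝ (fun q => fderiv ℝ g q v) p w = fderiv ℝ (fun q => fderiv ℝ g q w) p v := by
  have hdg : ∀ y, HasFDerivAt g (fderiv ℝ g y) y := fun y =>
    (hg.differentiable (by simp) y).hasFDerivAt
  have hdg2 : HasFDerivAt (fderiv ℝ g) (fderiv ℝ (fderiv ℝ g) p) p :=
    (((hg.fderiv_right (m := (⊤ : ℕ∞)) (by exact_mod_cast le_top)).differentiable (by simp)) p).hasFDerivAt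
  have hsym := second_derivative_symmetric hdg hdg2 v w
  have key : ∀ u : ℝ × ℝ, fderiv ℝ (fun q => fderiv ℝ g q u) p
      = (ContinuousLinearMap.apply ℝ ℝ u).comp (fderiv ℝ (fderiv ℝ g) p) := by
    intro u
    exact ((ContinuousLinearMap.apply ℝ ℝ u).hasFDerivAt.comp p hdg2).fderiv
  rw [key v, key w]
  simpa using hsym.symm

private lemma deriv2 {g : ℝ → ℝ} (hg : ContDiff ℝ (⊤ : ℕ∞) g) (t : ℝ) :
    HasDerivAt (deriv g) (deriv (deriv g) t) t := by
  have h : ContDiff ℝ (⊤ : ℕ∞) g := hg.of_le (by simp)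
  exact (((contDiff_infty_iff_deriv.mp h).2).differentiable (by simp) t).hasDerivAt

/-- Euclidean dot product on `ℝ²` (represented as `ℝ × ℝ`). -/
def dot2 (p q : ℝ × ℝ) : ℝ := p.1 * q.1 + p.2 * q.2

/-- Rotation by 90°: `J(a,b) = (−b,a)`. -/
def Jrot (p : ℝ × ℝ) : ℝ × ℝ := (-p.2, p.1)

/-- Second time derivative of the wetted surface parametrization under rigid motion
(`d = 1`): if `∂ₜζ_w = (U_G + ω J r_G)·N_w`, then
`∂ₜ²ζ_w = (U̇_G + ω̇ J r_G)·N_w + (ω J N_w)·(2U_{w,τ} − ω J r_G) + V_w² ∂ₓ²ζ_w`,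
where `U_w = U_G + ω J r_G`, `U_{w,τ} = U_w − (U_w·N_w)e_z`, and `V_w` is the
horizontal component of `U_w`. -/
theorem stmt_13 (ζw : ℝ → ℝ → ℝ) (xG zG ω : ℝ → ℝ)
    (hζ : ContDiff ℝ (⊤ : ℕ∞) (fun p : ℝ × ℝ => ζw p.1 p.2))
    (hxG : ContDiff ℝ (⊤ : ℕ∞) xG) (hzG : ContDiff ℝ (⊤ : ℕ∞) zG) (hω : ContDiff ℝ (⊤ : ℕ∞) ω)
    (hkin : ∀ t x : ℝ,
      deriv (fun s => ζw s x) t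
        = dot2 ((deriv xG t, deriv zG t) + ω t • Jrot (x - xG t, ζw t x - zG t))
            (-(deriv (ζw t) x), 1)) :
    ∀ t x : ℝ,
      let rG : ℝ × ℝ := (x - xG t, ζw t x - zG t)
      let Nw : ℝ × ℝ := (-(deriv (ζw t) x), 1)
      let UG : ℝ × ℝ := (deriv xG t, deriv zG t)
      let Uw : ℝ × ℝ := UG + ω t • Jrot rG
      let Uwτ : ℝ × ℝ := Uw - dot2 Uw Nw • ((0 : ℝ), (1 : ℝ))
      deriv (fun s => deriv (fun s' => ζw s' x) s) t
        = dot2 ((deriv (deriv xG) t, deriv (deriv zG) t) + deriv ω t • Jrot rG) Nw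
          + dot2 (ω t • Jrot Nw) ((2 : ℝ) • Uwτ - ω t • Jrot rG)
          + Uw.1 ^ 2 * deriv (deriv (ζw t)) x := by
  intro t x
  set f : ℝ × ℝ → ℝ := fun p => ζw p.1 p.2 with hf_def
  have hf : ContDiff ℝ (⊤ : ℕ∞) f := hζ
  set fx : ℝ × ℝ → ℝ := fun p => fderiv ℝ f p (0, 1) with hfx_def
  set ft : ℝ × ℝ → ℝ := fun p => fderiv ℝ f p (1, 0) with hft_def
  have hfx : ContDiff ℝ (⊤ : ℕ∞) fx := fd_smooth hf _
  have hft : ContDiff ℝ (⊤ : ℕ∞) ft := fd_smooth hf _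
  have hb : ∀ s y, deriv (ζw s) y = fx (s, y) := fun s y => (pd2 hf s y).deriv
  have ha : ∀ s y, deriv (fun s' => ζw s' y) s = ft (s, y) := fun s y => (pd1 hf s y).deriv
  have hkin' : ∀ s y, ft (s, y)
      = -(fx (s, y)) * (deriv xG s - ω s * (ζw s y - zG s))
        + (deriv zG s + ω s * (y - xG s)) := by
    intro s y
    have h := hkin s y
    rw [ha, hb] at h
    simp only [dot2, Jrot, Prod.mk_add_mk, Prod.smul_mk, smul_eq_mul] at h
    linear_combination h

  -- second x-derivative
  have hzwt : deriv (ζw t) = fun y => fx (t, y) := funext fun y => hb t y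
  have hA : deriv (deriv (ζw t)) x = fderiv ℝ fx (t, x) (0, 1) := by
    rw [hzwt]; exact (pd2 hfx t x).deriv
  set A : ℝ := fderiv ℝ fx (t, x) ((0 : ℝ), (1 : ℝ)) with hA_def
  -- mixed derivative via symmetry
  have h1 : HasDerivAt (fun y => fx (t, y)) A x := pd2 hfx t x
  have h2 : HasDerivAt (fun y => ζw t y) (fx (t, x)) x := pd2 hf t x
  have h3 : HasDerivAt (fun y => -(fx (t, y)) * (deriv xG t - ω t * (ζw t y - zG t))
      + (deriv zG t + ω t * (y - xG t)))
      (-A * (deriv xG t - ω t * (ζw t x - zG t)) + -(fx (t, x)) * (0 - ω t * fx (t, x))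
        + (0 + ω t * 1)) x := by
    have := (h1.fun_neg.fun_mul ((hasDerivAt_const x (deriv xG t)).fun_sub
        ((h2.sub_const (zG t)).const_mul (ω t)))).fun_add
      ((hasDerivAt_const x (deriv zG t)).fun_add (((hasDerivAt_id' x).sub_const (xG t)).const_mul (ω t)))
    convert this using 1 <;> ring
  have hftx : HasDerivAt (fun y => ft (t, y))
      (-A * (deriv xG t - ω t * (ζw t x - zG t)) + -(fx (t, x)) * (0 - ω t * fx (t, x))
        + (0 + ω t * 1)) x := by
    have he : (fun y => ft (t, y)) = (fun y => -(fx (t, y)) * (deriv xG t - ω t * (ζw t y - zG t))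
        + (deriv zG t + ω t * (y - xG t))) := funext fun y => hkin' t y
    rw [he]; exact h3
  have hmix : fderiv ℝ fx (t, x) ((1 : ℝ), (0 : ℝ))
      = -A * (deriv xG t - ω t * (ζw t x - zG t)) + -(fx (t, x)) * (0 - ω t * fx (t, x))
        + (0 + ω t * 1) := by
    have hs : fderiv ℝ fx (t, x) ((1 : ℝ), (0 : ℝ)) = fderiv ℝ ft (t, x) ((0 : ℝ), (1 : ℝ)) := by
      rw [hfx_def, hft_def]
      exact mixed_symm hf (t, x) (0, 1) (1, 0)
    rw [hs]
    exact (pd2 hft t x).unique hftx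
  -- time derivatives
  have hxGd : HasDerivAt xG (deriv xG t) t := ((hxG.differentiable (by simp)) t).hasDerivAt
  have hzGd : HasDerivAt zG (deriv zG t) t := ((hzG.differentiable (by simp)) t).hasDerivAt
  have hωd : HasDerivAt ω (deriv ω t) t := ((hω.differentiable (by simp)) t).hasDerivAt
  have hxG2 : HasDerivAt (deriv xG) (deriv (deriv xG) t) t := deriv2 hxG t
  have hzG2 : HasDerivAt (deriv zG) (deriv (deriv zG) t) t := deriv2 hzG t
  have h1t : HasDerivAt (fun s => fx (s, x))
      (-A * (deriv xG t - ω t * (ζw t x - zG t)) + -(fx (t, x)) * (0 - ω t * fx (t, x))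
        + (0 + ω t * 1)) t := by
    have := pd1 hfx t x
    rwa [hmix] at this
  have h2t : HasDerivAt (fun s => ζw s x) (ft (t, x)) t := pd1 hf t x
  have hbig := (h1t.fun_neg.fun_mul (hxG2.fun_sub (hωd.fun_mul (h2t.fun_sub hzGd)))).fun_add
    (hzG2.fun_add (hωd.fun_mul ((hasDerivAt_const t x).fun_sub hxGd)))
  have hL : (fun s => deriv (fun s' => ζw s' x) s) = fun s => ft (s, x) :=
    funext fun s => ha s x
  have hfun : (fun s => ft (s, x)) = fun s => -(fx (s, x)) * (deriv xG s - ω s * (ζw s x - zG s))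
      + (deriv zG s + ω s * (x - xG s)) := funext fun s => hkin' s x
  have hderiv := hbig.deriv
  rw [← hfun, ← hL] at hderiv
  simp only [dot2, Jrot, Prod.mk_add_mk, Prod.smul_mk, Prod.mk_sub_mk, smul_eq_mul,
    Prod.fst_add, Prod.snd_add, Prod.fst_sub, Prod.snd_sub, Prod.smul_fst, Prod.smul_snd]
  rw [hderiv, hb t x, hA, hkin' t x]
  ring
end

section
/- Let h_0 > 0, r_0 = (4/27)h_0^{3/2}, and let τ_0: (−∞, r_0) → ℝ be the continuous root of p_r(τ) = τ³ − √h_0 τ² + r with τ_0(0) = √h_0. Then τ_0 is strictly decreasing in r on a neighborhood of 0, τ_0(r) > (2/3)√h_0 for all r ∈ (−∞, r_0), and τ_0(r)² > h_0 if and only if r < 0. -/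
private lemma cube_mono (s a b : ℝ) (hs : 0 < s) (ha : 2/3*s < a) (hab : a < b) :
    a^3 - s*a^2 < b^3 - s*b^2 := by
  nlinarith [mul_pos (sub_pos.2 hab) (show (0:ℝ) < b + 2*a - s by nlinarith),
    mul_nonneg (le_of_lt (show (0:ℝ) < a by nlinarith)) (show (0:ℝ) ≤ 3*a - 2*s by nlinarith),
    sq_nonneg (a - b), sq_nonneg (a + b)]

/-- Properties of the continuous root branch `τ₀` of `τ³ − √h₀ τ² + r = 0` with
`τ₀(0) = √h₀`: it is strictly decreasing near `r = 0`, satisfies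
`τ₀(r) > (2/3)√h₀` for all `r < r₀ = (4/27) h₀^{3/2}`, and `τ₀(r)² > h₀ ↔ r < 0`. -/
theorem stmt_19 (h0 : ℝ) (hh0 : 0 < h0) (τ0 : ℝ → ℝ)
    (hcont : ContinuousOn τ0 (Set.Iio ((4 / 27) * Real.sqrt h0 ^ 3)))
    (hroot : ∀ r < (4 / 27) * Real.sqrt h0 ^ 3,
      τ0 r ^ 3 - Real.sqrt h0 * τ0 r ^ 2 + r = 0)
    (h00 : τ0 0 = Real.sqrt h0) :
    (∃ ε > 0, StrictAntiOn τ0 (Set.Ioo (-ε) ε)) ∧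
    (∀ r < (4 / 27) * Real.sqrt h0 ^ 3, (2 / 3) * Real.sqrt h0 < τ0 r) ∧
    (∀ r < (4 / 27) * Real.sqrt h0 ^ 3, (h0 < τ0 r ^ 2 ↔ r < 0)) := by
  set s := Real.sqrt h0 with hs_def
  have hs : 0 < s := Real.sqrt_pos.2 hh0
  have hs2 : s ^ 2 = h0 := Real.sq_sqrt hh0.le
  set r0 := (4 / 27) * s ^ 3 with hr0_def
  have hr0pos : 0 < r0 := by positivity
  -- if τ0 r = (2/3) s then r = r0
  have hne : ∀ r < r0, τ0 r ≠ 2/3 * s := by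
    intro r hr hc
    have := hroot r hr
    rw [hc] at this
    have : r = r0 := by rw [hr0_def]; nlinarith
    linarith
  -- main lower bound
  have hlb : ∀ r < r0, 2/3 * s < τ0 r := by
    intro r hr
    rcases lt_or_ge (2/3 * s) (τ0 r) with h | h
    · exact h
    have hlt : τ0 r < 2/3 * s := lt_of_le_of_ne h (hne r hr)
    -- IVT on uIcc r 0
    have hsub : Set.uIcc r 0 ⊆ Set.Iio r0 := by
      intro x hx
      rcases Set.mem_uIcc.1 hx with ⟨_, hx2⟩ | ⟨_, hx2⟩
      · exact (Set.mem_Iio).2 (lt_of_le_of_lt hx2 hr0pos)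
      · exact (Set.mem_Iio).2 (lt_of_le_of_lt hx2 hr)
    have hcont' : ContinuousOn τ0 (Set.uIcc r 0) := hcont.mono hsub
    have hmem : 2/3 * s ∈ Set.uIcc (τ0 r) (τ0 0) := by
      rw [h00]
      exact Set.mem_uIcc.2 (Or.inl ⟨hlt.le, by nlinarith⟩)
    obtain ⟨r', hr'mem, hr'eq⟩ := intermediate_value_uIcc hcont' hmem
    exact absurd hr'eq (hne r' (hsub hr'mem))
  refine ⟨?_, hlb, ?_⟩
  · -- strictly anti on Ioo (-r0) r0
    refine ⟨r0, hr0pos, ?_⟩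
    intro r1 hr1 r2 hr2 h12
    have h1 : r1 < r0 := hr1.2
    have h2 : r2 < r0 := hr2.2
    have e1 := hroot r1 h1
    have e2 := hroot r2 h2
    rcases lt_trichotomy (τ0 r2) (τ0 r1) with h | h | h
    · exact h
    · exfalso; rw [h] at e2; nlinarith
    · exfalso
      have := cube_mono s (τ0 r1) (τ0 r2) hs (hlb r1 h1) h
      nlinarith
  · intro r hr
    have e := hroot r hr
    have h23 : 2/3 * s < s := by nlinarith
    constructor
    · intro hsq
      have hgt : s < τ0 r := by
        nlinarith [hlb r hr]
      have := cube_mono s s (τ0 r) hs h23 hgt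
      nlinarith
    · intro hrneg
      by_contra hle
      push_neg at hle
      have hle' : τ0 r ≤ s := by
        nlinarith [hlb r hr]
      rcases eq_or_lt_of_le hle' with h | h
      · rw [h] at e; nlinarith
      · have := cube_mono s (τ0 r) s hs (hlb r hr) h
        nlinarith
end
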